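/- Let N⁺ = {((1, s; 0, 1), 0) : s ∈ ℝ} ⊆ G. For a closed subgroup H of G, the following are equivalent: (1) there exists a sequence (x_n) in G such that x_n N⁺ x_n⁻¹ converges to H in the Chabauty sense; (2) there exists x ∈ G such that H = x N⁺ x⁻¹ or H = x V₀ x⁻¹, where V₀ = {(I, (t, 0)) : t ∈ ℝ}. -/

import Mathlib

open Filter Topology

noncomputable section

/-- `SL(2,ℝ)`. -/
abbrev SL2 := Matrix.SpecialLinearGroup (Fin 2) ℝ

/-- The topology on `SL(2,ℝ)` induced from the space of `2×2` real matrices. -/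
instance : TopologicalSpace SL2 :=
  TopologicalSpace.induced ((↑) : SL2 → Matrix (Fin 2) (Fin 2) ℝ) inferInstance

/-- The underlying type of the group `G = SL(2,ℝ) ⋉ ℝ²`, with the product topology. -/
abbrev GG := SL2 × (Fin 2 → ℝ)

/-- Multiplication in `G`: `(g,v)(g',v') = (gg', v + g·v')`. -/
def gmul (x y : GG) : GG := (x.1 * y.1, x.2 + (x.1 : Matrix (Fin 2) (Fin 2) ℝ).mulVec y.2)

/-- The identity element of `G`. -/
def gone : GG := (1, 0)

/-- Inversion in `G`. -/
def ginv (x : GG) : GG := (x.1⁻¹, -((x.1⁻¹ : SL2) : Matrix (Fin 2) (Fin 2) ℝ).mulVec x.2)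

/-- The conjugate `x H x⁻¹` of a subset `H ⊆ G` by `x ∈ G`. -/
def conjSet (x : GG) (H : Set GG) : Set GG := (fun h => gmul (gmul x h) (ginv x)) '' H

/-- `H` is a closed subgroup of `G`. -/
def IsClosedSubgroup (H : Set GG) : Prop :=
  IsClosed H ∧ gone ∈ H ∧ (∀ a ∈ H, ∀ b ∈ H, gmul a b ∈ H) ∧ (∀ a ∈ H, ginv a ∈ H)

/-- Chabauty convergence of a sequence of subsets of a topological space:
(i) every point of the limit is a limit of a sequence of points of the `S n`;
(ii) every limit of a subsequence of points of the `S n` lies in the limit set. -/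
def ChabautyTendsto {X : Type*} [TopologicalSpace X] (S : ℕ → Set X) (T : Set X) : Prop :=
  (∀ h ∈ T, ∃ u : ℕ → X, (∀ n, u n ∈ S n) ∧ Tendsto u atTop (𝓝 h)) ∧
  (∀ k : ℕ → ℕ, StrictMono k → ∀ u : ℕ → X, (∀ n, u n ∈ S (k n)) →
    ∀ x : X, Tendsto u atTop (𝓝 x) → x ∈ T)

/-- The Levi subgroup `L = SL(2,ℝ) × {0}`. -/
def Lset : Set GG := {x | x.2 = 0}

/-- The subgroup `N⁺ ⋉ ℝ² = {((1,s;0,1), v) : s ∈ ℝ, v ∈ ℝ²}`. -/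
def NplusR2 : Set GG := {x | ∃ s : ℝ, (x.1 : Matrix (Fin 2) (Fin 2) ℝ) = !![1, s; 0, 1]}

/-- The maximal compact subgroup `K = SO(2,ℝ) × {0}`. -/
def Kset : Set GG :=
  {x | ∃ θ : ℝ, (x.1 : Matrix (Fin 2) (Fin 2) ℝ) =
      !![Real.cos θ, Real.sin θ; -Real.sin θ, Real.cos θ] ∧ x.2 = 0}

/-- `V_c = {(I,(t,ct)) : t ∈ ℝ}`. -/
def Vc (c : ℝ) : Set GG := {x | ∃ t : ℝ, x.1 = 1 ∧ x.2 = ![t, c * t]}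

/-- `V_∞ = {(I,(0,t)) : t ∈ ℝ}`. -/
def Vinf : Set GG := {x | ∃ t : ℝ, x.1 = 1 ∧ x.2 = ![0, t]}

/-- `Ñ⁺ = {(±(1,s;0,1), 0) : s ∈ ℝ}`. -/
def Ntilde : Set GG :=
  {x | (∃ s : ℝ, (x.1 : Matrix (Fin 2) (Fin 2) ℝ) = !![1, s; 0, 1] ∨
      (x.1 : Matrix (Fin 2) (Fin 2) ℝ) = -!![1, s; 0, 1]) ∧ x.2 = 0}

/-- The diagonal subgroup `A = {(diag(a,1/a), 0) : a > 0}`. -/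
def Aset : Set GG :=
  {x | ∃ a : ℝ, 0 < a ∧ (x.1 : Matrix (Fin 2) (Fin 2) ℝ) = !![a, 0; 0, a⁻¹] ∧ x.2 = 0}

/-- `V_{(a,b,c)} = {((1,at;0,1), (ct + abt²/2, bt)) : t ∈ ℝ}`. -/
def Vabc (a b c : ℝ) : Set GG :=
  {x | ∃ t : ℝ, (x.1 : Matrix (Fin 2) (Fin 2) ℝ) = !![1, a * t; 0, 1] ∧
      x.2 = ![c * t + a * b * t ^ 2 / 2, b * t]}

/-- The upper triangular Borel subgroup `B` of `SL(2,ℝ)`, inside `G`. -/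
def Bset : Set GG :=
  {x | ∃ a s : ℝ, a ≠ 0 ∧ (x.1 : Matrix (Fin 2) (Fin 2) ℝ) = !![a, s; 0, a⁻¹] ∧ x.2 = 0}

/-- `W = {((1,s;0,1), (t,0)) : s, t ∈ ℝ} = N⁺ ⋉ {(t,0)}`. -/
def Wset : Set GG :=
  {x | ∃ s t : ℝ, (x.1 : Matrix (Fin 2) (Fin 2) ℝ) = !![1, s; 0, 1] ∧ x.2 = ![t, 0]}

/-- The Borel subgroup `P = B ⋉ ℝ²` of `G`. -/
def Pset : Set GG :=
  {x | ∃ a s : ℝ, a ≠ 0 ∧ (x.1 : Matrix (Fin 2) (Fin 2) ℝ) = !![a, s; 0, a⁻¹]}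

/-- The translation subgroup `ℝ² = {(I,v) : v ∈ ℝ²}`. -/
def R2set : Set GG := {x | x.1 = 1}

/-- The unipotent subgroup `N⁺ = {((1,s;0,1), 0) : s ∈ ℝ}`. -/
def Nplus : Set GG := {x | ∃ s : ℝ, (x.1 : Matrix (Fin 2) (Fin 2) ℝ) = !![1, s; 0, 1] ∧ x.2 = 0}

/-- `V₀ = {(I,(t,0)) : t ∈ ℝ}`. -/
def V0 : Set GG := {x | ∃ t : ℝ, x.1 = 1 ∧ x.2 = ![t, 0]}

def upperUnipotent (s : ℝ) : SL2 :=
  ⟨!![1, s; 0, 1], by simp [Matrix.det_fin_two_of]⟩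

/-!
Conjugating `N⁺` by `(g, v)` gives the one-parameter group `s ↦ (1 + s p p⊥ᵀ, s c p)` with
`p = g e₁` and `c = p₁ v₀ - p₀ v₁`; rescaling `p` to a unit vector `w` rescales `c`, so these
conjugates are parametrized by `(w, c) ∈ S¹ × ℝ`, and the conjugates of `V₀` are the translation
lines `ℝ w`. On such a group the parameter `s` and the translation coordinate `s c` are continuous
functions of the element, so limits of elements are computed on the parameters. Given a
Chabauty-convergent sequence of conjugates, pass to a subsequence with `w_n → W` and either
`c_n → C`, where the limit is the conjugate with data `(W, C)`, or `|c_n| → ∞`, where the bounded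
translation part `s c_n` forces `s → 0` and the limit is the translation line `ℝ W`. Sequential
Chabauty limits are unique, so `H` is one of these; conversely `c_n = n` produces the lines.
-/

open Matrix

/-- `1 + s • p (p⊥)ᵀ` with `p⊥ = (-p 1, p 0)`: the transvection along the line `ℝ p`. -/
def shearMat (p : Fin 2 → ℝ) (s : ℝ) : Matrix (Fin 2) (Fin 2) ℝ :=
  !![1 - s * (p 0 * p 1), s * p 0 ^ 2; -(s * p 1 ^ 2), 1 + s * (p 0 * p 1)]

def shearAlong (p : Fin 2 → ℝ) (s : ℝ) : SL2 :=
  ⟨shearMat p s, by simp only [shearMat, det_fin_two_of]; ring⟩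

def unipElt (p : Fin 2 → ℝ) (s a : ℝ) : GG := (shearAlong p s, a • p)

def unipLine (p : Fin 2 → ℝ) (c : ℝ) : Set GG := Set.range fun s => unipElt p s (s * c)

def transLine (p : Fin 2 → ℝ) : Set GG := Set.range fun a : ℝ => ((1 : SL2), a • p)

def shearCoord (y : GG) : ℝ :=
  (y.1 : Matrix (Fin 2) (Fin 2) ℝ) 0 1 - (y.1 : Matrix (Fin 2) (Fin 2) ℝ) 1 0

theorem shearAlong_zero (p : Fin 2 → ℝ) : shearAlong p 0 = 1 := by
  ext i j
  fin_cases i <;> fin_cases j <;> simp [shearAlong, shearMat]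

theorem unipElt_zero (p : Fin 2 → ℝ) (a : ℝ) : unipElt p 0 a = ((1 : SL2), a • p) := by
  rw [unipElt, shearAlong_zero]

theorem unipElt_smul (r : ℝ) (p : Fin 2 → ℝ) (s a : ℝ) :
    unipElt (r • p) s a = unipElt p (r ^ 2 * s) (r * a) := by
  refine Prod.ext (Subtype.ext ?_) (by rw [unipElt, unipElt, smul_smul, mul_comm])
  ext i j
  fin_cases i <;> fin_cases j <;> simp [unipElt, shearAlong, shearMat] <;> ring

theorem shearCoord_unipElt {p : Fin 2 → ℝ} (hp : p ⬝ᵥ p = 1) (s a : ℝ) :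
    shearCoord (unipElt p s a) = s := by
  simp only [dotProduct, Fin.sum_univ_two] at hp
  simp only [shearCoord, unipElt, shearAlong, shearMat, of_apply, cons_val', cons_val_zero,
    cons_val_one, cons_val_fin_one]
  linear_combination s * hp

theorem unipElt_snd_dotProduct {p : Fin 2 → ℝ} (hp : p ⬝ᵥ p = 1) (s a : ℝ) :
    (unipElt p s a).2 ⬝ᵥ p = a := by
  simp [unipElt, smul_dotProduct, hp]

theorem unipLine_smul {r : ℝ} (hr : r ≠ 0) (p : Fin 2 → ℝ) (c : ℝ) :
    unipLine (r • p) c = unipLine p (c / r) := by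
  have hreparam : (fun s => unipElt (r • p) s (s * c)) =
      (fun t => unipElt p t (t * (c / r))) ∘ (r ^ 2 * ·) := by
    funext s
    simp only [Function.comp_apply, unipElt_smul]
    congr 1
    field_simp
  rw [unipLine, hreparam, (mul_left_surjective₀ (pow_ne_zero 2 hr)).range_comp]
  rfl

theorem transLine_smul {r : ℝ} (hr : r ≠ 0) (p : Fin 2 → ℝ) : transLine (r • p) = transLine p := by
  have hreparam : (fun a : ℝ => ((1 : SL2), a • r • p)) =
      (fun b : ℝ => ((1 : SL2), b • p)) ∘ (· * r) := by
    funext a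
    simp only [Function.comp_apply, smul_smul]
  rw [transLine, hreparam, (mul_right_surjective₀ hr).range_comp]
  rfl

theorem Nplus_eq_range : Nplus = Set.range fun s => ((upperUnipotent s, 0) : GG) := by
  ext x
  constructor
  · rintro ⟨s, hs, h0⟩
    exact ⟨s, Prod.ext (Subtype.ext hs.symm) h0.symm⟩
  · rintro ⟨s, rfl⟩
    exact ⟨s, rfl, rfl⟩

theorem V0_eq_range : V0 = Set.range fun t => ((1 : SL2), ![t, 0]) := by
  ext x
  constructor
  · rintro ⟨t, h1, h2⟩
    exact ⟨t, Prod.ext h1.symm h2.symm⟩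
  · rintro ⟨t, rfl⟩
    exact ⟨t, rfl, rfl⟩

def firstCol (g : SL2) : Fin 2 → ℝ := fun i => (g : Matrix (Fin 2) (Fin 2) ℝ) i 0

theorem conj_upperUnipotent (g : SL2) (v : Fin 2 → ℝ) (s : ℝ) :
    gmul (gmul (g, v) (upperUnipotent s, 0)) (ginv (g, v)) =
      unipElt (firstCol g) s (s * (firstCol g 1 * v 0 - firstCol g 0 * v 1)) := by
  have hdet := g.prop
  rw [det_fin_two] at hdet
  refine Prod.ext (Subtype.ext ?_) ?_
  · simp only [gmul, ginv, Matrix.SpecialLinearGroup.coe_mul, Matrix.SpecialLinearGroup.coe_inv,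
      adjugate_fin_two]
    ext i j
    fin_cases i <;> fin_cases j <;>
      simp [upperUnipotent, unipElt, firstCol, shearAlong, shearMat, mul_apply, Fin.sum_univ_two]
    · linear_combination hdet
    · ring
    · ring
    · linear_combination hdet
  · simp only [gmul, ginv, Matrix.SpecialLinearGroup.coe_mul, Matrix.SpecialLinearGroup.coe_inv,
      adjugate_fin_two]
    funext i
    fin_cases i <;>
      simp [upperUnipotent, unipElt, firstCol, dotProduct, Fin.sum_univ_two, mul_apply]
    · linear_combination -v 0 * hdet
    · linear_combination -v 1 * hdet

theorem conj_translation (g : SL2) (v : Fin 2 → ℝ) (t : ℝ) :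
    gmul (gmul (g, v) ((1 : SL2), ![t, 0])) (ginv (g, v)) = ((1 : SL2), t • firstCol g) := by
  refine Prod.ext (by simp [gmul, ginv]) ?_
  simp only [gmul, ginv, mul_one, mulVec_neg, mulVec_mulVec, ← Matrix.SpecialLinearGroup.coe_mul,
    mul_inv_cancel, Matrix.SpecialLinearGroup.coe_one, one_mulVec, add_neg_cancel_comm]
  funext i
  fin_cases i <;> simp [firstCol, mulVec, dotProduct, mul_comm]

theorem conjSet_Nplus (g : SL2) (v : Fin 2 → ℝ) :
    conjSet (g, v) Nplus = unipLine (firstCol g) (firstCol g 1 * v 0 - firstCol g 0 * v 1) := by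
  rw [conjSet, Nplus_eq_range, ← Set.range_comp]
  simp only [Function.comp_def, conj_upperUnipotent]
  rfl

theorem conjSet_V0 (g : SL2) (v : Fin 2 → ℝ) : conjSet (g, v) V0 = transLine (firstCol g) := by
  rw [conjSet, V0_eq_range, ← Set.range_comp]
  simp only [Function.comp_def, conj_translation]
  rfl

theorem firstCol_ne_zero (g : SL2) : firstCol g ≠ 0 := by
  intro h
  have hdet := g.prop
  have h0 := congrFun h 0
  have h1 := congrFun h 1
  simp only [firstCol, Pi.zero_apply] at h0 h1
  rw [det_fin_two, h0, h1] at hdet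
  simp at hdet

theorem exists_firstCol_eq {w : Fin 2 → ℝ} (hw : w ⬝ᵥ w = 1) : ∃ g : SL2, firstCol g = w := by
  simp only [dotProduct, Fin.sum_univ_two] at hw
  refine ⟨⟨!![w 0, -w 1; w 1, w 0], by rw [det_fin_two_of]; linear_combination hw⟩, ?_⟩
  funext i
  fin_cases i <;> rfl

theorem exists_eq_smul_unit {p : Fin 2 → ℝ} (hp : p ≠ 0) :
    ∃ r : ℝ, r ≠ 0 ∧ ∃ w : Fin 2 → ℝ, w ⬝ᵥ w = 1 ∧ p = r • w := by
  have hpos : 0 < p ⬝ᵥ p := by simpa using dotProduct_self_star_pos_iff.2 hp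
  have hr : √(p ⬝ᵥ p) ≠ 0 := (Real.sqrt_pos.2 hpos).ne'
  refine ⟨√(p ⬝ᵥ p), hr, (√(p ⬝ᵥ p))⁻¹ • p, ?_, by rw [smul_smul, mul_inv_cancel₀ hr, one_smul]⟩
  rw [smul_dotProduct, dotProduct_smul, smul_eq_mul, smul_eq_mul, ← mul_assoc]
  nth_rw 3 [← Real.mul_self_sqrt hpos.le]
  field_simp

theorem exists_unit_conjSet_Nplus (x : GG) :
    ∃ w : Fin 2 → ℝ, w ⬝ᵥ w = 1 ∧ ∃ c, conjSet x Nplus = unipLine w c := by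
  obtain ⟨g, v⟩ := x
  obtain ⟨r, hr, w, hw, hgw⟩ := exists_eq_smul_unit (firstCol_ne_zero g)
  exact ⟨w, hw, _, by rw [conjSet_Nplus, hgw, unipLine_smul hr]⟩

theorem exists_unit_conjSet_V0 (x : GG) :
    ∃ w : Fin 2 → ℝ, w ⬝ᵥ w = 1 ∧ conjSet x V0 = transLine w := by
  obtain ⟨g, v⟩ := x
  obtain ⟨r, hr, w, hw, hgw⟩ := exists_eq_smul_unit (firstCol_ne_zero g)
  exact ⟨w, hw, by rw [conjSet_V0, hgw, transLine_smul hr]⟩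

theorem exists_conjSet_Nplus_eq {w : Fin 2 → ℝ} (hw : w ⬝ᵥ w = 1) (c : ℝ) :
    ∃ x : GG, conjSet x Nplus = unipLine w c := by
  obtain ⟨g, hg⟩ := exists_firstCol_eq hw
  refine ⟨(g, c • ![w 1, -w 0]), ?_⟩
  rw [conjSet_Nplus, hg]
  simp only [dotProduct, Fin.sum_univ_two] at hw
  congr 1
  simp only [Pi.smul_apply, smul_eq_mul, cons_val_zero, cons_val_one, cons_val_fin_one]
  linear_combination c * hw

theorem exists_conjSet_V0_eq {w : Fin 2 → ℝ} (hw : w ⬝ᵥ w = 1) :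
    ∃ x : GG, conjSet x V0 = transLine w := by
  obtain ⟨g, hg⟩ := exists_firstCol_eq hw
  exact ⟨(g, 0), by rw [conjSet_V0, hg]⟩

section Chabauty

variable {X : Type*} [TopologicalSpace X] {S : ℕ → Set X} {T T' : Set X}

theorem ChabautyTendsto.subset (h : ChabautyTendsto S T) (h' : ChabautyTendsto S T') : T ⊆ T' := by
  intro x hx
  obtain ⟨u, hu, hux⟩ := h.1 x hx
  exact h'.2 id strictMono_id u hu x hux

theorem ChabautyTendsto.unique (h : ChabautyTendsto S T) (h' : ChabautyTendsto S T') : T = T' :=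
  (h.subset h').antisymm (h'.subset h)

theorem ChabautyTendsto.comp_strictMono (h : ChabautyTendsto S T) {φ : ℕ → ℕ}
    (hφ : StrictMono φ) : ChabautyTendsto (S ∘ φ) T := by
  refine ⟨fun x hx => ?_, fun k hk u hu x hux => h.2 (φ ∘ k) (hφ.comp hk) u hu x hux⟩
  obtain ⟨u, hu, hux⟩ := h.1 x hx
  exact ⟨u ∘ φ, fun n => hu (φ n), hux.comp hφ.tendsto_atTop⟩

end Chabauty

theorem isCompact_setOf_dotProduct_self_eq_one {ι : Type*} [Fintype ι] :
    IsCompact {w : ι → ℝ | w ⬝ᵥ w = 1} := by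
  refine Metric.isCompact_of_isClosed_isBounded
    (isClosed_eq (continuous_id.dotProduct continuous_id) continuous_const)
    ((Metric.isBounded_closedBall (x := 0) (r := 1)).subset fun w hw => ?_)
  rw [Set.mem_ofPred_eq, dotProduct] at hw
  rw [mem_closedBall_zero_iff, pi_norm_le_iff_of_nonneg zero_le_one]
  intro i
  have hi : w i * w i ≤ 1 :=
    hw ▸ Finset.single_le_sum (fun j _ => mul_self_nonneg (w j)) (Finset.mem_univ i)
  rw [Real.norm_eq_abs, abs_le]
  constructor <;> nlinarith

theorem exists_subseq_tendsto_or_tendsto_abs_atTop (c : ℕ → ℝ) :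
    (∃ φ : ℕ → ℕ, StrictMono φ ∧ ∃ C, Tendsto (c ∘ φ) atTop (𝓝 C)) ∨
      Tendsto (fun n => |c n|) atTop atTop := by
  by_cases h : Tendsto (fun n => |c n|) atTop atTop
  · exact Or.inr h
  left
  obtain ⟨b, hb⟩ : ∃ b, ∃ᶠ n in atTop, |c n| < b := by
    simpa [tendsto_atTop, Filter.frequently_atTop] using h
  obtain ⟨C, -, φ, hφ, hC⟩ := tendsto_subseq_of_frequently_bounded
    (Metric.isBounded_closedBall (x := 0) (r := b))
    (x := c) (hb.mono fun n hn => mem_closedBall_zero_iff.2 hn.le)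
  exact ⟨φ, hφ, C, hC⟩

instance : T2Space SL2 :=
  Topology.IsEmbedding.t2Space ⟨⟨rfl⟩, Subtype.val_injective⟩

theorem continuous_unipElt : Continuous fun q : (Fin 2 → ℝ) × ℝ × ℝ => unipElt q.1 q.2.1 q.2.2 := by
  refine Continuous.prodMk (continuous_induced_rng.2 ?_) ?_
  · exact (show Continuous fun q : (Fin 2 → ℝ) × ℝ × ℝ => shearMat q.1 q.2.1 by
      unfold shearMat; fun_prop)
  · exact (show Continuous fun q : (Fin 2 → ℝ) × ℝ × ℝ => q.2.2 • q.1 by fun_prop)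

theorem continuous_shearCoord : Continuous shearCoord := by
  have hcoe : Continuous fun y : GG => (y.1 : Matrix (Fin 2) (Fin 2) ℝ) :=
    continuous_induced_dom.comp continuous_fst
  unfold shearCoord
  fun_prop

theorem tendsto_unipElt {α : Type*} {l : Filter α} {w : α → Fin 2 → ℝ} {s a : α → ℝ}
    {W : Fin 2 → ℝ} {σ β : ℝ} (hw : Tendsto w l (𝓝 W)) (hs : Tendsto s l (𝓝 σ))
    (ha : Tendsto a l (𝓝 β)) :
    Tendsto (fun n => unipElt (w n) (s n) (a n)) l (𝓝 (unipElt W σ β)) := by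
  have hlim := (continuous_unipElt.tendsto (W, σ, β)).comp (hw.prodMk_nhds (hs.prodMk_nhds ha))
  exact hlim

theorem tendsto_params_of_tendsto_unipElt {w : ℕ → Fin 2 → ℝ} {s a : ℕ → ℝ} {W : Fin 2 → ℝ}
    {z : GG} (hw : ∀ n, w n ⬝ᵥ w n = 1) (hW : Tendsto w atTop (𝓝 W))
    (hz : Tendsto (fun n => unipElt (w n) (s n) (a n)) atTop (𝓝 z)) :
    Tendsto s atTop (𝓝 (shearCoord z)) ∧ Tendsto a atTop (𝓝 (z.2 ⬝ᵥ W)) ∧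
      z = unipElt W (shearCoord z) (z.2 ⬝ᵥ W) := by
  have hs : Tendsto s atTop (𝓝 (shearCoord z)) := by
    simpa only [Function.comp_def, shearCoord_unipElt (hw _)] using
      (continuous_shearCoord.tendsto z).comp hz
  have ha : Tendsto a atTop (𝓝 (z.2 ⬝ᵥ W)) := by
    have hprod : Continuous fun q : GG × (Fin 2 → ℝ) => q.1.2 ⬝ᵥ q.2 := by fun_prop
    simpa only [Function.comp_def, unipElt_snd_dotProduct (hw _)] using
      (hprod.tendsto (z, W)).comp (hz.prodMk_nhds hW)
  exact ⟨hs, ha, tendsto_nhds_unique hz (tendsto_unipElt hW hs ha)⟩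

theorem tendsto_zero_of_tendsto_mul_of_tendsto_abs_atTop {α : Type*} {l : Filter α} {x c : α → ℝ}
    {β : ℝ} (hx : Tendsto (fun n => x n * c n) l (𝓝 β)) (hc : Tendsto (fun n => |c n|) l atTop) :
    Tendsto x l (𝓝 0) := by
  rw [tendsto_zero_iff_norm_tendsto_zero]
  refine (hx.abs.div_atTop hc).congr' ?_
  filter_upwards [hc.eventually_gt_atTop 0] with n hn
  rw [abs_mul, mul_div_cancel_right₀ _ hn.ne', Real.norm_eq_abs]

section Limits

variable {w : ℕ → Fin 2 → ℝ} {c : ℕ → ℝ} {W : Fin 2 → ℝ}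

theorem chabautyTendsto_unipLine {C : ℝ} (hw : ∀ n, w n ⬝ᵥ w n = 1)
    (hW : Tendsto w atTop (𝓝 W)) (hc : Tendsto c atTop (𝓝 C)) :
    ChabautyTendsto (fun n => unipLine (w n) (c n)) (unipLine W C) := by
  refine ⟨?_, fun k hk u hu z hz => ?_⟩
  · rintro _ ⟨s, rfl⟩
    exact ⟨fun n => unipElt (w n) s (s * c n), fun n => ⟨s, rfl⟩,
      tendsto_unipElt hW tendsto_const_nhds (hc.const_mul s)⟩
  choose s hs using hu
  obtain rfl : u = fun n => unipElt (w (k n)) (s n) (s n * c (k n)) := funext fun n => (hs n).symm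
  obtain ⟨hσ, hβ, hz⟩ := tendsto_params_of_tendsto_unipElt (fun n => hw (k n))
    (hW.comp hk.tendsto_atTop) hz
  have hβC : z.2 ⬝ᵥ W = shearCoord z * C :=
    tendsto_nhds_unique hβ (hσ.mul (hc.comp hk.tendsto_atTop))
  rw [hβC] at hz
  exact ⟨shearCoord z, hz.symm⟩

theorem chabautyTendsto_transLine (hw : ∀ n, w n ⬝ᵥ w n = 1) (hW : Tendsto w atTop (𝓝 W))
    (hc : Tendsto (fun n => |c n|) atTop atTop) :
    ChabautyTendsto (fun n => unipLine (w n) (c n)) (transLine W) := by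
  refine ⟨?_, fun k hk u hu z hz => ?_⟩
  · rintro _ ⟨t, rfl⟩
    have ht : Tendsto (fun n => t / c n * c n) atTop (𝓝 t) := by
      refine tendsto_const_nhds.congr' ?_
      filter_upwards [hc.eventually_gt_atTop 0] with n hn
      rw [div_mul_cancel₀ _ (abs_pos.1 hn)]
    refine ⟨fun n => unipElt (w n) (t / c n) (t / c n * c n), fun n => ⟨t / c n, rfl⟩, ?_⟩
    simpa only [unipElt_zero] using
      tendsto_unipElt hW (tendsto_zero_of_tendsto_mul_of_tendsto_abs_atTop ht hc) ht
  choose s hs using hu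
  obtain rfl : u = fun n => unipElt (w (k n)) (s n) (s n * c (k n)) := funext fun n => (hs n).symm
  obtain ⟨hσ, hβ, hz⟩ := tendsto_params_of_tendsto_unipElt (fun n => hw (k n))
    (hW.comp hk.tendsto_atTop) hz
  have hσ0 : shearCoord z = 0 := tendsto_nhds_unique hσ
    (tendsto_zero_of_tendsto_mul_of_tendsto_abs_atTop hβ (hc.comp hk.tendsto_atTop))
  rw [hσ0, unipElt_zero] at hz
  exact ⟨z.2 ⬝ᵥ W, hz.symm⟩

theorem eq_unipLine_or_eq_transLine_of_chabautyTendsto {H : Set GG} (hw : ∀ n, w n ⬝ᵥ w n = 1)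
    (hH : ChabautyTendsto (fun n => unipLine (w n) (c n)) H) :
    (∃ W : Fin 2 → ℝ, W ⬝ᵥ W = 1 ∧ ∃ C, H = unipLine W C) ∨
      ∃ W : Fin 2 → ℝ, W ⬝ᵥ W = 1 ∧ H = transLine W := by
  obtain ⟨W, hW, φ, hφ, hwφ⟩ := isCompact_setOf_dotProduct_self_eq_one.tendsto_subseq hw
  have hHφ := hH.comp_strictMono hφ
  rcases exists_subseq_tendsto_or_tendsto_abs_atTop (c ∘ φ) with ⟨ψ, hψ, C, hc⟩ | hc
  · exact Or.inl ⟨W, hW, C, (hHφ.comp_strictMono hψ).unique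
      (chabautyTendsto_unipLine (fun n => hw _) (hwφ.comp hψ.tendsto_atTop) hc)⟩
  · exact Or.inr ⟨W, hW, hHφ.unique (chabautyTendsto_transLine (fun n => hw _) hwφ hc)⟩

end Limits

theorem stmt_9_general (H : Set GG) :
    (∃ x : ℕ → GG, ChabautyTendsto (fun n => conjSet (x n) Nplus) H) ↔
      (∃ y : GG, H = conjSet y Nplus ∨ H = conjSet y V0) := by
  constructor
  · rintro ⟨x, hx⟩
    choose w hw c hc using fun n => exists_unit_conjSet_Nplus (x n)
    simp only [hc] at hx
    rcases eq_unipLine_or_eq_transLine_of_chabautyTendsto hw hx with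
      ⟨W, hW, C, rfl⟩ | ⟨W, hW, rfl⟩
    · obtain ⟨y, hy⟩ := exists_conjSet_Nplus_eq hW C
      exact ⟨y, Or.inl hy.symm⟩
    · obtain ⟨y, hy⟩ := exists_conjSet_V0_eq hW
      exact ⟨y, Or.inr hy.symm⟩
  · rintro ⟨y, rfl | rfl⟩
    · obtain ⟨w, hw, c, hc⟩ := exists_unit_conjSet_Nplus y
      refine ⟨fun _ => y, ?_⟩
      simp only [hc]
      exact chabautyTendsto_unipLine (fun _ => hw) tendsto_const_nhds tendsto_const_nhds
    · obtain ⟨w, hw, hc⟩ := exists_unit_conjSet_V0 y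
      choose x hx using fun n : ℕ => exists_conjSet_Nplus_eq hw n
      refine ⟨x, ?_⟩
      simp only [hc, hx]
      exact chabautyTendsto_transLine (fun _ => hw) tendsto_const_nhds
        (tendsto_abs_atTop_atTop.comp tendsto_natCast_atTop_atTop)

/-- A closed subgroup `H` of `G` is a Chabauty limit of conjugates of `N⁺` iff `H` is a
conjugate of `N⁺` or of `V₀`. -/
theorem stmt_9 (H : Set GG) (hH : IsClosedSubgroup H) :
    (∃ x : ℕ → GG, ChabautyTendsto (fun n => conjSet (x n) Nplus) H) ↔
      (∃ y : GG, H = conjSet y Nplus ∨ H = conjSet y V0) :=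
  stmt_9_general H

end
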